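/- Let X be a set of pairwise non-opposite chambers of a finite thick generalized quadrangle of order (s,t) with |X| = (s+1)(t+1) and (s,t) ≠ (2,2). Then there exists a point P such that X consists of all chambers whose line contains P, or a line l such that X consists of all chambers whose point lies on l. -/
import Mathlib


/-- A finite generalized quadrangle of order `(s, t)`: every line has `s + 1` points,
every point lies on `t + 1` lines, two distinct points lie on at most one common line,
and for every anti-flag `(p, l)` there is a unique point of `l` collinear with `p`. -/
structure GenQuad (Pt Ln : Type*) (s t : ℕ) where
  incid : Pt → Ln → Prop
  line_card : ∀ l : Ln, Nat.card {p : Pt // incid p l} = s + 1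
  point_card : ∀ p : Pt, Nat.card {l : Ln // incid p l} = t + 1
  unique_line : ∀ ⦃p q : Pt⦄ ⦃l m : Ln⦄, p ≠ q → incid p l → incid q l →
    incid p m → incid q m → l = m
  antiflag : ∀ ⦃p : Pt⦄ ⦃l : Ln⦄, ¬ incid p l →
    ∃! q : Pt, incid q l ∧ ∃ m : Ln, incid p m ∧ incid q m

variable {Pt Ln : Type*} {s t : ℕ}

/-- Two points are collinear if some line contains both. -/
def GenQuad.Collinear (G : GenQuad Pt Ln s t) (p q : Pt) : Prop :=
  ∃ m : Ln, G.incid p m ∧ G.incid q m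

/-- A chamber is an incident point-line pair. -/
def GenQuad.IsChamber (G : GenQuad Pt Ln s t) (c : Pt × Ln) : Prop :=
  G.incid c.1 c.2

/-- Two chambers are opposite if their lines share no point and their points are
not collinear. -/
def GenQuad.Opp (G : GenQuad Pt Ln s t) (c c' : Pt × Ln) : Prop :=
  (¬ ∃ q : Pt, G.incid q c.2 ∧ G.incid q c'.2) ∧ ¬ G.Collinear c.1 c'.1

/-- `F(P)`: the set of chambers whose line passes through the point `P`. -/
def GenQuad.FlagsThruPoint (G : GenQuad Pt Ln s t) (P : Pt) : Set (Pt × Ln) :=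
  {c | G.IsChamber c ∧ G.incid P c.2}

/-- `F(l)`: the set of chambers whose point lies on the line `l`. -/
def GenQuad.FlagsOnLine (G : GenQuad Pt Ln s t) (l : Ln) : Set (Pt × Ln) :=
  {c | G.IsChamber c ∧ G.incid c.1 l}

/-- A set of pairwise non-opposite chambers. -/
def GenQuad.NonOppSet (G : GenQuad Pt Ln s t) (X : Set (Pt × Ln)) : Prop :=
  (∀ c ∈ X, G.IsChamber c) ∧ ∀ c ∈ X, ∀ c' ∈ X, ¬ G.Opp c c'

/-- A maximal set of pairwise non-opposite chambers. -/
def GenQuad.MaxNonOppSet (G : GenQuad Pt Ln s t) (X : Set (Pt × Ln)) : Prop :=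
  G.NonOppSet X ∧ ∀ c : Pt × Ln, G.IsChamber c → c ∉ X → ∃ c' ∈ X, G.Opp c c'

set_option linter.unusedSectionVars false
set_option maxHeartbeats 1000000

namespace GenQuad

variable (G : GenQuad Pt Ln s t)

/-! ### Basic lemmas -/

lemma point_on_line_exists (l : Ln) : ∃ p, G.incid p l := by
  have h : Nat.card {p : Pt // G.incid p l} ≠ 0 := by rw [G.line_card]; omega
  have : Nonempty {p : Pt // G.incid p l} := (Nat.card_ne_zero.mp h).1
  obtain ⟨⟨p, hp⟩⟩ := this
  exact ⟨p, hp⟩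

lemma line_thru_point_exists (p : Pt) : ∃ l, G.incid p l := by
  have h : Nat.card {l : Ln // G.incid p l} ≠ 0 := by rw [G.point_card]; omega
  have : Nonempty {l : Ln // G.incid p l} := (Nat.card_ne_zero.mp h).1
  obtain ⟨⟨l, hl⟩⟩ := this
  exact ⟨l, hl⟩

lemma collinear_self (p : Pt) : G.Collinear p p := by
  obtain ⟨l, hl⟩ := G.line_thru_point_exists p
  exact ⟨l, hl, hl⟩

lemma collinear_symm {p q : Pt} (h : G.Collinear p q) : G.Collinear q p := by
  obtain ⟨m, h1, h2⟩ := h; exact ⟨m, h2, h1⟩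

lemma collinear_of_incid {p q : Pt} {l : Ln} (hp : G.incid p l) (hq : G.incid q l) :
    G.Collinear p q := ⟨l, hp, hq⟩

/-- Two distinct lines meet in at most one point. -/
lemma meet_unique {l l' : Ln} {u w : Pt} (hne : l ≠ l') (h1 : G.incid u l)
    (h2 : G.incid u l') (h3 : G.incid w l) (h4 : G.incid w l') : u = w := by
  by_contra hc
  exact hne (G.unique_line hc h1 h3 h2 h4)

/-- No triangles in a generalized quadrangle. -/
lemma noTriangle {a b c : Pt} {l : Ln} (hab : a ≠ b) (ha : G.incid a l)
    (hb : G.incid b l) (hc : ¬ G.incid c l) (hca : G.Collinear c a)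
    (hcb : G.Collinear c b) : False := by
  obtain ⟨q, _, hq⟩ := G.antiflag hc
  exact hab ((hq a ⟨ha, hca⟩).trans (hq b ⟨hb, hcb⟩).symm)

/-- Three distinct pairwise collinear points lie on a common line. -/
lemma triple_line {a b c : Pt} (hab : a ≠ b)
    (h1 : G.Collinear a b) (h2 : G.Collinear c a) (h3 : G.Collinear c b) :
    ∃ l, G.incid a l ∧ G.incid b l ∧ G.incid c l := by
  obtain ⟨l, ha, hb⟩ := h1
  by_cases hc : G.incid c l
  · exact ⟨l, ha, hb, hc⟩
  · exact absurd (G.noTriangle hab ha hb hc h2 h3) (fun h => h)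

/-- The unique point of `l` collinear with `p ∉ l`. -/
lemma proj_pt (hp : ¬ G.incid p l) :
    ∃! q, G.incid q l ∧ G.Collinear p q := G.antiflag hp

/-- The unique line through `p ∉ l` meeting `l`. -/
lemma proj_ln {p : Pt} {l : Ln} (hp : ¬ G.incid p l) :
    ∃! n, G.incid p n ∧ ∃ q, G.incid q l ∧ G.incid q n := by
  obtain ⟨q, ⟨hql, m, hpm, hqm⟩, huniq⟩ := G.antiflag hp
  refine ⟨m, ⟨hpm, q, hql, hqm⟩, ?_⟩
  rintro n ⟨hpn, x, hxl, hxn⟩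
  have hx : x = q := huniq x ⟨hxl, n, hpn, hxn⟩
  subst hx
  have hpx : p ≠ x := fun h => hp (h ▸ hxl)
  exact G.unique_line hpx hpn hxn hpm hqm

/-- Perp of a non-collinear pair is pairwise non-collinear. -/
lemma triadPerp {a b x y : Pt} (hab : ¬ G.Collinear a b) (hxy : x ≠ y)
    (hxa : G.Collinear x a) (hxb : G.Collinear x b) (hya : G.Collinear y a)
    (hyb : G.Collinear y b) : ¬ G.Collinear x y := by
  intro h
  obtain ⟨lam, hx, hy⟩ := h
  by_cases hal : G.incid a lam
  · by_cases hbl : G.incid b lam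
    · exact hab ⟨lam, hal, hbl⟩
    · exact G.noTriangle hxy hx hy hbl (G.collinear_symm hxb) (G.collinear_symm hyb)
  · exact G.noTriangle hxy hx hy hal (G.collinear_symm hxa) (G.collinear_symm hya)

/-! ### Counting lemmas -/

lemma ncard_pts_on (l : Ln) : {p | G.incid p l}.ncard = s + 1 := by
  rw [← Nat.card_coe_set_eq]
  exact G.line_card l

lemma ncard_lns_thru (p : Pt) : {n | G.incid p n}.ncard = t + 1 := by
  rw [← Nat.card_coe_set_eq]
  exact G.point_card p

variable [Finite Pt] [Finite Ln]

lemma ncard_le_of_inj_pt (X : Set (Pt × Ln)) (S : Set Pt)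
    (hS : ∀ c ∈ X, c.1 ∈ S)
    (hinj : ∀ c ∈ X, ∀ c' ∈ X, c.1 = c'.1 → c = c') :
    X.ncard ≤ S.ncard := by
  have h1 : (Prod.fst '' X).ncard = X.ncard :=
    Set.ncard_image_of_injOn (fun c hc c' hc' h => hinj c hc c' hc' h)
  rw [← h1]
  exact Set.ncard_le_ncard (by rintro x ⟨c, hc, rfl⟩; exact hS c hc) (Set.toFinite S)

lemma ncard_le_of_inj_ln (X : Set (Pt × Ln)) (S : Set Ln)
    (hS : ∀ c ∈ X, c.2 ∈ S)
    (hinj : ∀ c ∈ X, ∀ c' ∈ X, c.2 = c'.2 → c = c') :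
    X.ncard ≤ S.ncard := by
  have h1 : (Prod.snd '' X).ncard = X.ncard :=
    Set.ncard_image_of_injOn (fun c hc c' hc' h => hinj c hc c' hc' h)
  rw [← h1]
  exact Set.ncard_le_ncard (by rintro x ⟨c, hc, rfl⟩; exact hS c hc) (Set.toFinite S)

lemma ncard_pts_on_ne (l : Ln) (p₀ : Pt) (h : G.incid p₀ l) :
    {q | G.incid q l ∧ q ≠ p₀}.ncard ≤ s := by
  have h1 : {q | G.incid q l ∧ q ≠ p₀} ⊆ {q | G.incid q l} \ {p₀} := by
    rintro q ⟨h1, h2⟩; exact ⟨h1, h2⟩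
  calc {q | G.incid q l ∧ q ≠ p₀}.ncard
      ≤ ({q | G.incid q l} \ {p₀}).ncard := Set.ncard_le_ncard h1 (Set.toFinite _)
    _ = {q | G.incid q l}.ncard - 1 := Set.ncard_diff_singleton_of_mem h
    _ ≤ s := by rw [G.ncard_pts_on]; omega

lemma ncard_lns_thru_ne (p : Pt) (l₀ : Ln) (h : G.incid p l₀) :
    {n | G.incid p n ∧ n ≠ l₀}.ncard ≤ t := by
  have h1 : {n | G.incid p n ∧ n ≠ l₀} ⊆ {n | G.incid p n} \ {l₀} := by
    rintro n ⟨h1, h2⟩; exact ⟨h1, h2⟩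
  calc {n | G.incid p n ∧ n ≠ l₀}.ncard
      ≤ ({n | G.incid p n} \ {l₀}).ncard := Set.ncard_le_ncard h1 (Set.toFinite _)
    _ = {n | G.incid p n}.ncard - 1 := Set.ncard_diff_singleton_of_mem h
    _ ≤ t := by rw [G.ncard_lns_thru]; omega

end GenQuad

/-- Globalization of a pairwise dichotomy. -/
lemma glob_dichotomy {γ A B : Type*} (Y : Set γ) (f : γ → A) (g : γ → B)
    (h : ∀ c ∈ Y, ∀ c' ∈ Y, f c = f c' ∨ g c = g c') :
    (∀ c ∈ Y, ∀ c' ∈ Y, f c = f c') ∨ (∀ c ∈ Y, ∀ c' ∈ Y, g c = g c') := by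
  by_cases hf : ∀ c ∈ Y, ∀ c' ∈ Y, f c = f c'
  · exact Or.inl hf
  · push_neg at hf
    obtain ⟨c0, hc0, c1, hc1, hne⟩ := hf
    have hg01 : g c0 = g c1 := (h c0 hc0 c1 hc1).resolve_left hne
    right
    have key : ∀ c ∈ Y, g c = g c0 := by
      intro c hc
      by_contra hgc
      have h0 : f c = f c0 := (h c hc c0 hc0).resolve_right hgc
      have h1 : f c = f c1 := (h c hc c1 hc1).resolve_right (hg01 ▸ hgc)
      exact hne (h0 ▸ h1)
    intro c hc c' hc'
    rw [key c hc, key c' hc']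

namespace GenQuad

variable (G : GenQuad Pt Ln s t) {X : Set (Pt × Ln)}

lemma nonopp_or (hX : G.NonOppSet X) {c c' : Pt × Ln} (hc : c ∈ X) (hc' : c' ∈ X) :
    (∃ u, G.incid u c.2 ∧ G.incid u c'.2) ∨ G.Collinear c.1 c'.1 := by
  have h := hX.2 c hc c' hc'
  by_cases h1 : ∃ u, G.incid u c.2 ∧ G.incid u c'.2
  · exact Or.inl h1
  · by_cases h2 : G.Collinear c.1 c'.1
    · exact Or.inr h2
    · exact absurd ⟨h1, h2⟩ h

lemma chamber (hX : G.NonOppSet X) {c : Pt × Ln} (hc : c ∈ X) : G.incid c.1 c.2 :=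
  hX.1 c hc

/-- A point with two flags sees all points of the clique. -/
lemma hub_pt (hX : G.NonOppSet X) {f g : Pt × Ln} (hf : f ∈ X) (hg : g ∈ X)
    (hfg : f ≠ g) (hq : f.1 = g.1) : ∀ c ∈ X, G.Collinear c.1 f.1 := by
  intro c hc
  by_cases hin : G.incid f.1 c.2
  · exact ⟨c.2, G.chamber hX hc, hin⟩
  rcases G.nonopp_or hX hc hf with ⟨u, huc, huf⟩ | hcol
  · rcases G.nonopp_or hX hc hg with ⟨w, hwc, hwg⟩ | hcol
    · -- u = w by uniqueness of the point of c.2 collinear with f.1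
      have hu : u = w := by
        obtain ⟨q, _, huniq⟩ := G.proj_pt hin
        have h1 : u = q := huniq u ⟨huc, f.2, G.chamber hX hf, huf⟩
        have h2 : w = q := huniq w ⟨hwc, g.2, hq ▸ G.chamber hX hg, hwg⟩
        rw [h1, h2]
      subst hu
      have hne : u ≠ f.1 := fun h => hin (h ▸ huc)
      have hlines : f.2 = g.2 :=
        G.unique_line hne huf (G.chamber hX hf) hwg (hq ▸ G.chamber hX hg)
      exact absurd (Prod.ext hq hlines) hfg
    · exact hq ▸ hcol
  · exact hcol

/-- A line with two flags meets all lines of the clique. -/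
lemma hub_ln (hX : G.NonOppSet X) {f g : Pt × Ln} (hf : f ∈ X) (hg : g ∈ X)
    (hfg : f ≠ g) (hl : f.2 = g.2) : ∀ c ∈ X, ∃ u, G.incid u c.2 ∧ G.incid u f.2 := by
  intro c hc
  have hpts : f.1 ≠ g.1 := fun h => hfg (Prod.ext h hl)
  by_cases hin : G.incid c.1 f.2
  · exact ⟨c.1, G.chamber hX hc, hin⟩
  rcases G.nonopp_or hX hc hf with hmeet | hcol
  · exact hmeet
  rcases G.nonopp_or hX hc hg with hmeet | hcol2
  · obtain ⟨u, h1, h2⟩ := hmeet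
    exact ⟨u, h1, hl ▸ h2⟩
  · exact absurd (G.noTriangle hpts (G.chamber hX hf) (hl ▸ G.chamber hX hg) hin hcol hcol2)
      (fun h => h)

/-- Two distinct points each with two flags force all points on one line. -/
lemma two_hub_pts (hX : G.NonOppSet X) {f g f' g' : Pt × Ln}
    (hf : f ∈ X) (hg : g ∈ X) (hf' : f' ∈ X) (hg' : g' ∈ X)
    (hfg : f ≠ g) (hq : f.1 = g.1) (hfg' : f' ≠ g') (hq' : f'.1 = g'.1)
    (hqq : f.1 ≠ f'.1) : ∃ lam, ∀ c ∈ X, G.incid c.1 lam := by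
  have h01 : G.Collinear f.1 f'.1 := G.hub_pt hX hf' hg' hfg' hq' f hf
  obtain ⟨lam, h0, h1⟩ := h01
  refine ⟨lam, fun c hc => ?_⟩
  by_cases hin : G.incid c.1 lam
  · exact hin
  · exact absurd (G.noTriangle hqq h0 h1 hin
      (G.hub_pt hX hf hg hfg hq c hc) (G.hub_pt hX hf' hg' hfg' hq' c hc)) (fun h => h)

/-- Two distinct lines each with two flags force all lines through one point. -/
lemma two_hub_lns (hX : G.NonOppSet X) {f g f' g' : Pt × Ln}
    (hf : f ∈ X) (hg : g ∈ X) (hf' : f' ∈ X) (hg' : g' ∈ X)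
    (hfg : f ≠ g) (hl : f.2 = g.2) (hfg' : f' ≠ g') (hl' : f'.2 = g'.2)
    (hll : f.2 ≠ f'.2) : ∃ v, ∀ c ∈ X, G.incid v c.2 := by
  obtain ⟨v, hv0, hv1⟩ := G.hub_ln hX hf' hg' hfg' hl' f hf
  -- v ∈ f.2 ∩ f'.2
  refine ⟨v, fun c hc => ?_⟩
  by_cases hin : G.incid v c.2
  · exact hin
  obtain ⟨u0, hu0c, hu0⟩ := G.hub_ln hX hf hg hfg hl c hc
  obtain ⟨u1, hu1c, hu1⟩ := G.hub_ln hX hf' hg' hfg' hl' c hc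
  have hu0v : u0 ≠ v := fun h => hin (h ▸ hu0c)
  have hu1v : u1 ≠ v := fun h => hin (h ▸ hu1c)
  have hu01 : u0 ≠ u1 := by
    intro h
    exact hu0v (G.meet_unique hll hu0 (h ▸ hu1) hv0 hv1)
  have hu1f : ¬ G.incid u1 f.2 := by
    intro h
    exact hu01 (G.meet_unique (fun hh : c.2 = f.2 => hin (hh ▸ hv0)) hu1c h hu0c hu0).symm
  exact absurd (G.noTriangle hu0v.symm hv0 hu0 hu1f ⟨f'.2, hu1, hv1⟩ ⟨c.2, hu1c, hu0c⟩)
    (fun h => h)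

/-- A multi-point and a multi-line must be incident. -/
lemma hub_pt_ln_incid (hX : G.NonOppSet X) {f g f' g' : Pt × Ln}
    (hf : f ∈ X) (hg : g ∈ X) (hf' : f' ∈ X) (hg' : g' ∈ X)
    (hfg : f ≠ g) (hq : f.1 = g.1) (hfg' : f' ≠ g') (hl' : f'.2 = g'.2) :
    G.incid f.1 f'.2 := by
  by_contra hin
  have hx12 : f'.1 ≠ g'.1 := fun h => hfg' (Prod.ext h hl')
  have key : ∀ a ∈ X, a.1 = f.1 → (¬ ∃ u, G.incid u a.2 ∧ G.incid u f'.2) → False := by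
    intro a ha hapt hdisj
    rcases G.nonopp_or hX ha hf' with hmeet | hcol1
    · exact hdisj hmeet
    rcases G.nonopp_or hX ha hg' with hmeet | hcol2
    · obtain ⟨u, h1, h2⟩ := hmeet
      exact hdisj ⟨u, h1, hl' ▸ h2⟩
    -- f.1 collinear with both f'.1 and g'.1 on line f'.2, but f.1 not on f'.2
    exact G.noTriangle hx12 (G.chamber hX hf') (hl' ▸ G.chamber hX hg') hin
      (hapt ▸ hcol1) (hapt ▸ hcol2)
  -- at most one of f.2, g.2 meets f'.2
  by_cases hm : ∃ u, G.incid u f.2 ∧ G.incid u f'.2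
  · obtain ⟨u, huf, hu'⟩ := hm
    refine key g hg hq.symm ?_
    rintro ⟨w, hwg, hw'⟩
    have huw : u = w := by
      obtain ⟨q, _, huniq⟩ := G.proj_pt hin
      have h1 : u = q := huniq u ⟨hu', f.2, G.chamber hX hf, huf⟩
      have h2 : w = q := huniq w ⟨hw', g.2, hq ▸ G.chamber hX hg, hwg⟩
      rw [h1, h2]
    subst huw
    have hne : u ≠ f.1 := fun h => hin (h ▸ hu')
    exact hfg (Prod.ext hq (G.unique_line hne huf (G.chamber hX hf) hwg
      (hq ▸ G.chamber hX hg)))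
  · exact key f hf rfl hm

end GenQuad

namespace GenQuad

variable [Finite Pt] [Finite Ln] (G : GenQuad Pt Ln s t) {X : Set (Pt × Ln)}

/-- Case IV: a multi-point and a multi-line exist (in a mixed clique). -/
lemma case_IV (hs : 2 ≤ s) (ht : 2 ≤ t) (hX : G.NonOppSet X)
    {c1 c2 c3 c4 : Pt × Ln} (h1 : c1 ∈ X) (h2 : c2 ∈ X) (h3 : c3 ∈ X) (h4 : c4 ∈ X)
    (hdisj : ¬ ∃ u, G.incid u c1.2 ∧ G.incid u c2.2) (hnc : ¬ G.Collinear c3.1 c4.1)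
    {f g f' g' : Pt × Ln} (hf : f ∈ X) (hg : g ∈ X) (hf' : f' ∈ X) (hg' : g' ∈ X)
    (hfg : f ≠ g) (hq : f.1 = g.1) (hfg' : f' ≠ g') (hl' : f'.2 = g'.2) :
    X.ncard ≤ s * t + s + t := by
  classical
  set q0 := f.1 with hq0
  set h0 := f'.2 with hh0
  have hq0h0 : G.incid q0 h0 := G.hub_pt_ln_incid hX hf hg hf' hg' hfg hq hfg' hl'
  -- uniqueness of the multi-line
  have hLuniq : ∀ c ∈ X, ∀ c' ∈ X, c.2 = c'.2 → c.2 ≠ h0 → c = c' := by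
    intro c hc c' hc' hll hne
    by_contra hcc
    obtain ⟨v, hv⟩ := G.two_hub_lns hX hc hc' hf' hg' hcc hll hfg' hl' hne
    exact hdisj ⟨v, hv c1 h1, hv c2 h2⟩
  have hPuniq : ∀ c ∈ X, ∀ c' ∈ X, c.1 = c'.1 → c.1 ≠ q0 → c = c' := by
    intro c hc c' hc' hll hne
    by_contra hcc
    obtain ⟨lam, hv⟩ := G.two_hub_pts hX hc hc' hf hg hcc hll hfg hq hne
    exact hnc ⟨lam, hv c3 h3, hv c4 h4⟩
  -- decomposition
  set Xq := {c ∈ X | c.1 = q0} with hXq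
  set Xh := {c ∈ X | c.2 = h0 ∧ c.1 ≠ q0} with hXh
  set R := {c ∈ X | c.1 ≠ q0 ∧ c.2 ≠ h0} with hR
  have hcover : X ⊆ Xq ∪ Xh ∪ R := by
    intro c hc
    by_cases ha : c.1 = q0
    · exact Or.inl (Or.inl ⟨hc, ha⟩)
    by_cases hb : c.2 = h0
    · exact Or.inl (Or.inr ⟨hc, hb, ha⟩)
    · exact Or.inr ⟨hc, ha, hb⟩
  have hXqcard : Xq.ncard ≤ t + 1 := by
    have := ncard_le_of_inj_ln Xq {n | G.incid q0 n}
      (fun c hc => hc.2 ▸ G.chamber hX hc.1)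
      (fun c hc c' hc' h => Prod.ext (hc.2.trans hc'.2.symm) h)
    rwa [G.ncard_lns_thru q0] at this
  have hXhcard : Xh.ncard ≤ s + 1 := by
    have := ncard_le_of_inj_pt Xh {p | G.incid p h0}
      (fun c hc => hc.2.1 ▸ G.chamber hX hc.1)
      (fun c hc c' hc' h => hPuniq c hc.1 c' hc'.1 h (hc.2.2))
    rwa [G.ncard_pts_on h0] at this
  -- R analysis
  have hRcol : ∀ c ∈ R, G.Collinear c.1 q0 := fun c hc => G.hub_pt hX hf hg hfg hq c hc.1
  have hRmeet : ∀ c ∈ R, ∃ u, G.incid u c.2 ∧ G.incid u h0 :=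
    fun c hc => G.hub_ln hX hf' hg' hfg' hl' c hc.1
  have hgmex : ∀ c : Pt × Ln, ∃ m : Ln, c ∈ R → (G.incid c.1 m ∧ G.incid q0 m) := by
    intro c
    by_cases hc : c ∈ R
    · obtain ⟨m, hm⟩ := hRcol c hc
      exact ⟨m, fun _ => hm⟩
    · exact ⟨h0, fun h => absurd h hc⟩
  choose gm hgm using hgmex
  have hymex : ∀ c : Pt × Ln, ∃ u : Pt, c ∈ R → (G.incid u c.2 ∧ G.incid u h0) := by
    intro c
    by_cases hc : c ∈ R
    · obtain ⟨u, hu⟩ := hRmeet c hc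
      exact ⟨u, fun _ => hu⟩
    · exact ⟨q0, fun h => absurd h hc⟩
  choose ym hym using hymex
  have hdich : ∀ c ∈ R, ∀ c' ∈ R, gm c = gm c' ∨ ym c = ym c' := by
    intro c hc c' hc'
    by_cases hpt : c.1 = c'.1
    · left
      have h := hPuniq c hc.1 c' hc'.1 hpt hc.2.1
      rw [h]
    by_cases hln : c.2 = c'.2
    · exact absurd (hLuniq c hc.1 c' hc'.1 hln hc.2.2) (fun h => hpt (by rw [h]))
    by_cases hcol : G.Collinear c.1 c'.1
    · left
      obtain ⟨lam, ha, hb, hcq⟩ := G.triple_line hpt hcol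
        (G.collinear_symm (hRcol c hc)) (G.collinear_symm (hRcol c' hc'))
      have e1 : gm c = lam := G.unique_line hc.2.1 (hgm c hc).1 (hgm c hc).2 ha hcq
      have e2 : gm c' = lam := G.unique_line hc'.2.1 (hgm c' hc').1 (hgm c' hc').2 hb hcq
      rw [e1, e2]
    · right
      obtain ⟨u, huc, huc'⟩ := (G.nonopp_or hX hc.1 hc'.1).resolve_right hcol
      by_cases hu : G.incid u h0
      · have e1 : u = ym c := G.meet_unique hc.2.2 huc hu (hym c hc).1 (hym c hc).2
        have e2 : u = ym c' := G.meet_unique hc'.2.2 huc' hu (hym c' hc').1 (hym c' hc').2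
        rw [← e1, ← e2]
      · by_cases hyy : ym c = ym c'
        · exact hyy
        · exact absurd (G.noTriangle hyy (hym c hc).2 (hym c' hc').2 hu
            ⟨c.2, huc, (hym c hc).1⟩ ⟨c'.2, huc', (hym c' hc').1⟩) (fun h => h)
  have hRcard : R.ncard ≤ s ∨ R.ncard ≤ t := by
    rcases R.eq_empty_or_nonempty with hRe | ⟨c₀, hc₀⟩
    · left; rw [hRe]; simp
    rcases glob_dichotomy R gm ym hdich with hall | hall
    · left
      have hsub : ∀ c ∈ R, G.incid c.1 (gm c₀) ∧ c.1 ≠ q0 := by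
        intro c hc
        exact ⟨(hall c hc c₀ hc₀) ▸ (hgm c hc).1, hc.2.1⟩
      have := ncard_le_of_inj_pt R {q | G.incid q (gm c₀) ∧ q ≠ q0}
        (fun c hc => hsub c hc)
        (fun c hc c' hc' h => hPuniq c hc.1 c' hc'.1 h hc.2.1)
      exact this.trans (G.ncard_pts_on_ne (gm c₀) q0 (hgm c₀ hc₀).2)
    · right
      have hsub : ∀ c ∈ R, G.incid (ym c₀) c.2 ∧ c.2 ≠ h0 := by
        intro c hc
        exact ⟨(hall c hc c₀ hc₀) ▸ (hym c hc).1, hc.2.2⟩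
      have := ncard_le_of_inj_ln R {n | G.incid (ym c₀) n ∧ n ≠ h0}
        (fun c hc => hsub c hc)
        (fun c hc c' hc' h => hLuniq c hc.1 c' hc'.1 h hc.2.2)
      exact this.trans (G.ncard_lns_thru_ne (ym c₀) h0 (hym c₀ hc₀).2)
  have htot : X.ncard ≤ (t + 1) + ((s + 1) + R.ncard) :=
    calc X.ncard ≤ (Xq ∪ Xh ∪ R).ncard := Set.ncard_le_ncard hcover (Set.toFinite _)
      _ ≤ (Xq ∪ Xh).ncard + R.ncard := Set.ncard_union_le _ _
      _ ≤ (Xq.ncard + Xh.ncard) + R.ncard := by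
          have := Set.ncard_union_le Xq Xh; omega
      _ ≤ (t + 1) + ((s + 1) + R.ncard) := by omega
  rcases hRcard with h | h
  · nlinarith
  · nlinarith


/-- Case II: a multi-point exists but no multi-line. -/
lemma case_II (hs : 2 ≤ s) (ht : 2 ≤ t) (hX : G.NonOppSet X)
    {c3 c4 : Pt × Ln} (h3 : c3 ∈ X) (h4 : c4 ∈ X) (hnc : ¬ G.Collinear c3.1 c4.1)
    {f g : Pt × Ln} (hf : f ∈ X) (hg : g ∈ X) (hfg : f ≠ g) (hq : f.1 = g.1)
    (hLuniq : ∀ c ∈ X, ∀ c' ∈ X, c.2 = c'.2 → c = c') :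
    X.ncard ≤ s * t + s + t := by
  classical
  set q0 := f.1 with hq0
  have hPuniq : ∀ c ∈ X, ∀ c' ∈ X, c.1 = c'.1 → c.1 ≠ q0 → c = c' := by
    intro c hc c' hc' hll hne
    by_contra hcc
    obtain ⟨lam, hv⟩ := G.two_hub_pts hX hc hc' hf hg hcc hll hfg hq hne
    exact hnc ⟨lam, hv c3 h3, hv c4 h4⟩
  set XQ := {c ∈ X | G.incid q0 c.2} with hXQ
  set R := {c ∈ X | ¬ G.incid q0 c.2} with hRdef
  have hcover : X ⊆ XQ ∪ R := by
    intro c hc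
    by_cases ha : G.incid q0 c.2
    · exact Or.inl ⟨hc, ha⟩
    · exact Or.inr ⟨hc, ha⟩
  have hXQcard : XQ.ncard ≤ t + 1 := by
    have := ncard_le_of_inj_ln XQ {n | G.incid q0 n}
      (fun c hc => hc.2)
      (fun c hc c' hc' h => hLuniq c hc.1 c' hc'.1 h)
    rwa [G.ncard_lns_thru q0] at this
  have hRq : ∀ c ∈ R, c.1 ≠ q0 := by
    intro c hc h
    exact hc.2 (h ▸ G.chamber hX hc.1)
  have hRcol : ∀ c ∈ R, G.Collinear c.1 q0 := fun c hc => G.hub_pt hX hf hg hfg hq c hc.1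
  have hgmex : ∀ c : Pt × Ln, ∃ m : Ln, c ∈ R → (G.incid c.1 m ∧ G.incid q0 m) := by
    intro c
    by_cases hc : c ∈ R
    · obtain ⟨m, hm⟩ := hRcol c hc
      exact ⟨m, fun _ => hm⟩
    · exact ⟨f.2, fun h => absurd h hc⟩
  choose gm hgm using hgmex
  have hgm_ne : ∀ c ∈ R, ∀ c' ∈ R, gm c ≠ gm c' → c.2 ≠ c'.2 := by
    intro c hc c' hc' hne h
    exact hne (by rw [hLuniq c hc.1 c' hc'.1 h])
  have hmeet : ∀ c ∈ R, ∀ c' ∈ R, gm c ≠ gm c' →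
      ∃ u, G.incid u c.2 ∧ G.incid u c'.2 := by
    intro c hc c' hc' hne
    have hpt : c.1 ≠ c'.1 := by
      intro h
      exact hne (by rw [hPuniq c hc.1 c' hc'.1 h (hRq c hc)])
    by_cases hcol : G.Collinear c.1 c'.1
    · exfalso
      obtain ⟨lam, ha, hb, hcq⟩ := G.triple_line hpt hcol
        (G.collinear_symm (hRcol c hc)) (G.collinear_symm (hRcol c' hc'))
      have e1 : gm c = lam := G.unique_line (hRq c hc) (hgm c hc).1 (hgm c hc).2 ha hcq
      have e2 : gm c' = lam := G.unique_line (hRq c' hc') (hgm c' hc').1 (hgm c' hc').2 hb hcq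
      exact hne (e1.trans e2.symm)
    · exact (G.nonopp_or hX hc.1 hc'.1).resolve_right hcol
  have hfib : ∀ c₀ ∈ R, {c ∈ R | gm c = gm c₀}.ncard ≤ s := by
    intro c₀ hc₀
    have := ncard_le_of_inj_pt {c ∈ R | gm c = gm c₀} {q | G.incid q (gm c₀) ∧ q ≠ q0}
      (fun c hc => ⟨hc.2 ▸ (hgm c hc.1).1, hRq c hc.1⟩)
      (fun c hc c' hc' h => hPuniq c hc.1.1 c' hc'.1.1 h (hRq c hc.1))
    exact this.trans (G.ncard_pts_on_ne (gm c₀) q0 (hgm c₀ hc₀).2)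
  have hRcard : R.ncard ≤ t + 1 ∨ R.ncard ≤ 2 * s := by
    by_cases h3d : ∃ d1 ∈ R, ∃ d2 ∈ R, ∃ d3 ∈ R,
        gm d1 ≠ gm d2 ∧ gm d1 ≠ gm d3 ∧ gm d2 ≠ gm d3
    · left
      obtain ⟨d1, hd1, d2, hd2, d3, hd3, h12, h13, h23⟩ := h3d
      obtain ⟨v, hv1, hv2⟩ := hmeet d1 hd1 d2 hd2 h12
      have hv3 : G.incid v d3.2 := by
        by_contra hvc
        obtain ⟨u13, hu13a, hu13b⟩ := hmeet d1 hd1 d3 hd3 h13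
        obtain ⟨u23, hu23a, hu23b⟩ := hmeet d2 hd2 d3 hd3 h23
        have hne : u13 ≠ u23 := by
          intro h
          exact hvc ((G.meet_unique (hgm_ne d1 hd1 d2 hd2 h12) hu13a (h ▸ hu23a) hv1 hv2) ▸
            hu13b)
        exact G.noTriangle hne hu13b hu23b hvc ⟨d1.2, hv1, hu13a⟩ ⟨d2.2, hv2, hu23a⟩
      have prop : ∀ da ∈ R, ∀ db ∈ R, gm da ≠ gm db → G.incid v da.2 → G.incid v db.2 →
          ∀ c ∈ R, gm c ≠ gm da → gm c ≠ gm db → G.incid v c.2 := by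
        intro da hda db hdb hab hva hvb c hc hca hcb
        by_contra hvc
        obtain ⟨a, hac, haa⟩ := hmeet c hc da hda hca
        obtain ⟨b, hbc, hbb⟩ := hmeet c hc db hdb hcb
        have hav : a ≠ v := fun h => hvc (h ▸ hac)
        have hab' : a ≠ b := by
          intro h
          exact hav (G.meet_unique (hgm_ne da hda db hdb hab) haa (h ▸ hbb) hva hvb)
        have hbda : ¬ G.incid b da.2 := by
          intro h
          exact hab' (G.meet_unique (hgm_ne c hc da hda hca) hbc h hac haa).symm
        exact G.noTriangle hav haa hva hbda ⟨c.2, hbc, hac⟩ ⟨db.2, hbb, hvb⟩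
      have hall : ∀ c ∈ R, G.incid v c.2 := by
        intro c hc
        by_cases e1 : gm c = gm d1
        · exact prop d2 hd2 d3 hd3 h23 hv2 hv3 c hc (e1 ▸ h12) (e1 ▸ h13)
        by_cases e2 : gm c = gm d2
        · exact prop d1 hd1 d3 hd3 h13 hv1 hv3 c hc e1 (e2 ▸ h23)
        · exact prop d1 hd1 d2 hd2 h12 hv1 hv2 c hc e1 e2
      have := ncard_le_of_inj_ln R {n | G.incid v n}
        (fun c hc => hall c hc)
        (fun c hc c' hc' h => hLuniq c hc.1 c' hc'.1 h)
      rw [G.ncard_lns_thru v] at this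
      exact this
    · right
      push_neg at h3d
      rcases R.eq_empty_or_nonempty with hRe | ⟨a, ha⟩
      · rw [hRe]; simp
      by_cases hone : ∀ c ∈ R, gm c = gm a
      · have h := hfib a ha
        have hsub : R ⊆ {c ∈ R | gm c = gm a} := fun c hc => ⟨hc, hone c hc⟩
        have := Set.ncard_le_ncard hsub (Set.toFinite _)
        omega
      · push_neg at hone
        obtain ⟨b, hb, hba⟩ := hone
        have hsub : R ⊆ {c ∈ R | gm c = gm a} ∪ {c ∈ R | gm c = gm b} := by
          intro c hc
          have := h3d a ha b hb c hc
          by_cases e1 : gm c = gm a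
          · exact Or.inl ⟨hc, e1⟩
          · refine Or.inr ⟨hc, ?_⟩
            by_contra e2
            exact e2 ((this (fun h => hba h.symm) (fun h => e1 h.symm)).symm)
        calc R.ncard ≤ ({c ∈ R | gm c = gm a} ∪ {c ∈ R | gm c = gm b}).ncard :=
              Set.ncard_le_ncard hsub (Set.toFinite _)
          _ ≤ {c ∈ R | gm c = gm a}.ncard + {c ∈ R | gm c = gm b}.ncard :=
              Set.ncard_union_le _ _
          _ ≤ 2 * s := by
              have := hfib a ha; have := hfib b hb; omega
  have htot : X.ncard ≤ (t + 1) + R.ncard :=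
    calc X.ncard ≤ (XQ ∪ R).ncard := Set.ncard_le_ncard hcover (Set.toFinite _)
      _ ≤ XQ.ncard + R.ncard := Set.ncard_union_le _ _
      _ ≤ (t + 1) + R.ncard := by omega
  rcases hRcard with h | h
  · nlinarith
  · nlinarith


/-- Case III: a multi-line exists but no multi-point. -/
lemma case_III (hs : 2 ≤ s) (ht : 2 ≤ t) (hX : G.NonOppSet X)
    {c1 c2 : Pt × Ln} (h1 : c1 ∈ X) (h2 : c2 ∈ X)
    (hdisj : ¬ ∃ u, G.incid u c1.2 ∧ G.incid u c2.2)
    {f g : Pt × Ln} (hf : f ∈ X) (hg : g ∈ X) (hfg : f ≠ g) (hl : f.2 = g.2)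
    (hPuniq : ∀ c ∈ X, ∀ c' ∈ X, c.1 = c'.1 → c = c') :
    X.ncard ≤ s * t + s + t := by
  classical
  set h0 := f.2 with hh0
  have hLuniq : ∀ c ∈ X, ∀ c' ∈ X, c.2 = c'.2 → c.2 ≠ h0 → c = c' := by
    intro c hc c' hc' hll hne
    by_contra hcc
    obtain ⟨v, hv⟩ := G.two_hub_lns hX hc hc' hf hg hcc hll hfg hl hne
    exact hdisj ⟨v, hv c1 h1, hv c2 h2⟩
  set XH := {c ∈ X | G.incid c.1 h0} with hXH
  set R := {c ∈ X | ¬ G.incid c.1 h0} with hRdef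
  have hcover : X ⊆ XH ∪ R := by
    intro c hc
    by_cases ha : G.incid c.1 h0
    · exact Or.inl ⟨hc, ha⟩
    · exact Or.inr ⟨hc, ha⟩
  have hXHcard : XH.ncard ≤ s + 1 := by
    have := ncard_le_of_inj_pt XH {p | G.incid p h0}
      (fun c hc => hc.2)
      (fun c hc c' hc' h => hPuniq c hc.1 c' hc'.1 h)
    rwa [G.ncard_pts_on h0] at this
  have hRl : ∀ c ∈ R, c.2 ≠ h0 := by
    intro c hc h
    exact hc.2 (h ▸ G.chamber hX hc.1)
  have hRmeet : ∀ c ∈ R, ∃ u, G.incid u c.2 ∧ G.incid u h0 :=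
    fun c hc => G.hub_ln hX hf hg hfg hl c hc.1
  have hymex : ∀ c : Pt × Ln, ∃ u : Pt, c ∈ R → (G.incid u c.2 ∧ G.incid u h0) := by
    intro c
    by_cases hc : c ∈ R
    · obtain ⟨u, hu⟩ := hRmeet c hc
      exact ⟨u, fun _ => hu⟩
    · exact ⟨f.1, fun h => absurd h hc⟩
  choose ym hym using hymex
  have hym_ne : ∀ c ∈ R, ∀ c' ∈ R, ym c ≠ ym c' → c.1 ≠ c'.1 := by
    intro c hc c' hc' hne h
    exact hne (by rw [hPuniq c hc.1 c' hc'.1 h])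
  have hcolc : ∀ c ∈ R, ∀ c' ∈ R, ym c ≠ ym c' → G.Collinear c.1 c'.1 := by
    intro c hc c' hc' hne
    have hll : c.2 ≠ c'.2 := by
      intro h
      exact hne (by rw [hLuniq c hc.1 c' hc'.1 h (hRl c hc)])
    rcases G.nonopp_or hX hc.1 hc'.1 with ⟨u, huc, huc'⟩ | hcol
    · exfalso
      by_cases hu : G.incid u h0
      · exact hne ((G.meet_unique (hRl c hc) huc hu (hym c hc).1 (hym c hc).2).symm.trans
          (G.meet_unique (hRl c' hc') huc' hu (hym c' hc').1 (hym c' hc').2))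
      · exact G.noTriangle hne (hym c hc).2 (hym c' hc').2 hu
          ⟨c.2, huc, (hym c hc).1⟩ ⟨c'.2, huc', (hym c' hc').1⟩
    · exact hcol
  have hfib : ∀ c₀ ∈ R, {c ∈ R | ym c = ym c₀}.ncard ≤ t := by
    intro c₀ hc₀
    have := ncard_le_of_inj_ln {c ∈ R | ym c = ym c₀} {n | G.incid (ym c₀) n ∧ n ≠ h0}
      (fun c hc => ⟨hc.2 ▸ (hym c hc.1).1, hRl c hc.1⟩)
      (fun c hc c' hc' h => hLuniq c hc.1.1 c' hc'.1.1 h (hRl c hc.1))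
    exact this.trans (G.ncard_lns_thru_ne (ym c₀) h0 (hym c₀ hc₀).2)
  have hRcard : R.ncard ≤ s + 1 ∨ R.ncard ≤ 2 * t := by
    by_cases h3d : ∃ d1 ∈ R, ∃ d2 ∈ R, ∃ d3 ∈ R,
        ym d1 ≠ ym d2 ∧ ym d1 ≠ ym d3 ∧ ym d2 ≠ ym d3
    · left
      obtain ⟨d1, hd1, d2, hd2, d3, hd3, h12, h13, h23⟩ := h3d
      obtain ⟨lam, hl1, hl2, hl3⟩ := G.triple_line (hym_ne d1 hd1 d2 hd2 h12)
        (hcolc d1 hd1 d2 hd2 h12) (G.collinear_symm (hcolc d1 hd1 d3 hd3 h13))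
        (G.collinear_symm (hcolc d2 hd2 d3 hd3 h23))
      have prop : ∀ da ∈ R, ∀ db ∈ R, ym da ≠ ym db →
          G.incid da.1 lam → G.incid db.1 lam →
          ∀ c ∈ R, ym c ≠ ym da → ym c ≠ ym db → G.incid c.1 lam := by
        intro da hda db hdb hab hva hvb c hc hca hcb
        by_contra hvc
        exact G.noTriangle (hym_ne da hda db hdb hab) hva hvb hvc
          (hcolc c hc da hda hca) (hcolc c hc db hdb hcb)
      have hall : ∀ c ∈ R, G.incid c.1 lam := by
        intro c hc
        by_cases e1 : ym c = ym d1
        · exact prop d2 hd2 d3 hd3 h23 hl2 hl3 c hc (e1 ▸ h12) (e1 ▸ h13)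
        by_cases e2 : ym c = ym d2
        · exact prop d1 hd1 d3 hd3 h13 hl1 hl3 c hc e1 (e2 ▸ h23)
        · exact prop d1 hd1 d2 hd2 h12 hl1 hl2 c hc e1 e2
      have := ncard_le_of_inj_pt R {p | G.incid p lam}
        (fun c hc => hall c hc)
        (fun c hc c' hc' h => hPuniq c hc.1 c' hc'.1 h)
      rw [G.ncard_pts_on lam] at this
      exact this
    · right
      push_neg at h3d
      rcases R.eq_empty_or_nonempty with hRe | ⟨a, ha⟩
      · rw [hRe]; simp
      by_cases hone : ∀ c ∈ R, ym c = ym a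
      · have h := hfib a ha
        have hsub : R ⊆ {c ∈ R | ym c = ym a} := fun c hc => ⟨hc, hone c hc⟩
        have := Set.ncard_le_ncard hsub (Set.toFinite _)
        omega
      · push_neg at hone
        obtain ⟨b, hb, hba⟩ := hone
        have hsub : R ⊆ {c ∈ R | ym c = ym a} ∪ {c ∈ R | ym c = ym b} := by
          intro c hc
          have := h3d a ha b hb c hc
          by_cases e1 : ym c = ym a
          · exact Or.inl ⟨hc, e1⟩
          · refine Or.inr ⟨hc, ?_⟩
            by_contra e2
            exact e2 ((this (fun h => hba h.symm) (fun h => e1 h.symm)).symm)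
        calc R.ncard ≤ ({c ∈ R | ym c = ym a} ∪ {c ∈ R | ym c = ym b}).ncard :=
              Set.ncard_le_ncard hsub (Set.toFinite _)
          _ ≤ {c ∈ R | ym c = ym a}.ncard + {c ∈ R | ym c = ym b}.ncard :=
              Set.ncard_union_le _ _
          _ ≤ 2 * t := by
              have := hfib a ha; have := hfib b hb; omega
  have htot : X.ncard ≤ (s + 1) + R.ncard :=
    calc X.ncard ≤ (XH ∪ R).ncard := Set.ncard_le_ncard hcover (Set.toFinite _)
      _ ≤ XH.ncard + R.ncard := Set.ncard_union_le _ _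
      _ ≤ (s + 1) + R.ncard := by omega
  rcases hRcard with h | h
  · nlinarith
  · nlinarith


/-- Case I, no-center subcase. -/
lemma case_I_nocenter (hs : 2 ≤ s) (ht : 3 ≤ t) (hX : G.NonOppSet X)
    (hPuniq : ∀ c ∈ X, ∀ c' ∈ X, c.1 = c'.1 → c = c')
    (hLuniq : ∀ c ∈ X, ∀ c' ∈ X, c.2 = c'.2 → c = c')
    (hnocen : ∀ b ∈ X, (∀ a ∈ X, ∃ u, G.incid u b.2 ∧ G.incid u a.2) ∨
      (∀ d ∈ X, G.Collinear b.1 d.1)) :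
    X.ncard ≤ s * t + s + t := by
  classical
  set XL := {c ∈ X | ∀ a ∈ X, ∃ u, G.incid u c.2 ∧ G.incid u a.2} with hXL
  set XP := {c ∈ X | ∀ d ∈ X, G.Collinear c.1 d.1} with hXP
  have hcover : X ⊆ XL ∪ XP := by
    intro c hc
    rcases hnocen c hc with h | h
    · exact Or.inl ⟨hc, h⟩
    · exact Or.inr ⟨hc, h⟩
  have hXLcard : XL.ncard ≤ t + 1 := by
    by_cases h2 : XL.ncard ≤ 2
    · omega
    · push_neg at h2
      obtain ⟨d1, hd1, d2, hd2, d3, hd3, h12, h13, h23⟩ :=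
        (Set.two_lt_ncard (Set.toFinite XL)).mp h2
      have hlne : ∀ c ∈ XL, ∀ c' ∈ XL, c ≠ c' → c.2 ≠ c'.2 := by
        intro c hc c' hc' hne h
        exact hne (hLuniq c hc.1 c' hc'.1 h)
      obtain ⟨v, hv1, hv2⟩ := hd1.2 d2 hd2.1
      have hv3 : G.incid v d3.2 := by
        by_contra hvc
        obtain ⟨u13, hu13a, hu13b⟩ := hd1.2 d3 hd3.1
        obtain ⟨u23, hu23a, hu23b⟩ := hd2.2 d3 hd3.1
        have hne : u13 ≠ u23 := by
          intro h
          exact hvc ((G.meet_unique (hlne d1 hd1 d2 hd2 h12) hu13a (h ▸ hu23a) hv1 hv2) ▸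
            hu13b)
        exact G.noTriangle hne hu13b hu23b hvc ⟨d1.2, hv1, hu13a⟩ ⟨d2.2, hv2, hu23a⟩
      have prop : ∀ da ∈ XL, ∀ db ∈ XL, da ≠ db → G.incid v da.2 → G.incid v db.2 →
          ∀ c ∈ XL, c ≠ da → c ≠ db → G.incid v c.2 := by
        intro da hda db hdb hab hva hvb c hc hca hcb
        by_contra hvc
        obtain ⟨a, hac, haa⟩ := hc.2 da hda.1
        obtain ⟨b, hbc, hbb⟩ := hc.2 db hdb.1
        have hav : a ≠ v := fun h => hvc (h ▸ hac)
        have hab' : a ≠ b := by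
          intro h
          exact hav (G.meet_unique (hlne da hda db hdb hab) haa (h ▸ hbb) hva hvb)
        have hbda : ¬ G.incid b da.2 := by
          intro h
          exact hab' (G.meet_unique (hlne c hc da hda hca) hbc h hac haa).symm
        exact G.noTriangle hav haa hva hbda ⟨c.2, hbc, hac⟩ ⟨db.2, hbb, hvb⟩
      have hall : ∀ c ∈ XL, G.incid v c.2 := by
        intro c hc
        by_cases e1 : c = d1
        · exact e1 ▸ hv1
        by_cases e2 : c = d2
        · exact e2 ▸ hv2
        by_cases e3 : c = d3
        · exact e3 ▸ hv3
        · exact prop d1 hd1 d2 hd2 h12 hv1 hv2 c hc e1 e2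
      have := ncard_le_of_inj_ln XL {n | G.incid v n}
        (fun c hc => hall c hc)
        (fun c hc c' hc' h => hLuniq c hc.1 c' hc'.1 h)
      rw [G.ncard_lns_thru v] at this
      exact this
  have hXPcard : XP.ncard ≤ s + 1 := by
    by_cases h2 : XP.ncard ≤ 2
    · omega
    · push_neg at h2
      obtain ⟨d1, hd1, d2, hd2, d3, hd3, h12, h13, h23⟩ :=
        (Set.two_lt_ncard (Set.toFinite XP)).mp h2
      have hpne : ∀ c ∈ XP, ∀ c' ∈ XP, c ≠ c' → c.1 ≠ c'.1 := by
        intro c hc c' hc' hne h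
        exact hne (hPuniq c hc.1 c' hc'.1 h)
      obtain ⟨lam, hl1, hl2, hl3⟩ := G.triple_line (hpne d1 hd1 d2 hd2 h12)
        (hd1.2 d2 hd2.1) (G.collinear_symm (hd1.2 d3 hd3.1))
        (G.collinear_symm (hd2.2 d3 hd3.1))
      have hall : ∀ c ∈ XP, G.incid c.1 lam := by
        intro c hc
        by_cases hvc : G.incid c.1 lam
        · exact hvc
        exfalso
        by_cases e1 : c = d1
        · exact hvc (e1 ▸ hl1)
        by_cases e2 : c = d2
        · exact hvc (e2 ▸ hl2)
        · exact G.noTriangle (hpne d1 hd1 d2 hd2 h12) hl1 hl2 hvc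
            (hc.2 d1 hd1.1) (hc.2 d2 hd2.1)
      have := ncard_le_of_inj_pt XP {p | G.incid p lam}
        (fun c hc => hall c hc)
        (fun c hc c' hc' h => hPuniq c hc.1 c' hc'.1 h)
      rw [G.ncard_pts_on lam] at this
      exact this
  have htot : X.ncard ≤ (t + 1) + (s + 1) :=
    calc X.ncard ≤ (XL ∪ XP).ncard := Set.ncard_le_ncard hcover (Set.toFinite _)
      _ ≤ XL.ncard + XP.ncard := Set.ncard_union_le _ _
      _ ≤ (t + 1) + (s + 1) := by omega
  nlinarith


/-- Case I, center subcase: there are flags `ca, cb, cd ∈ X` with the lines of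
`ca, cb` disjoint and the points of `cb, cd` non-collinear. -/
lemma case_I_center (hs : 2 ≤ s) (ht : 3 ≤ t) (hX : G.NonOppSet X)
    (hPuniq : ∀ c ∈ X, ∀ c' ∈ X, c.1 = c'.1 → c = c')
    (hLuniq : ∀ c ∈ X, ∀ c' ∈ X, c.2 = c'.2 → c = c')
    {ca cb cd : Pt × Ln} (hca : ca ∈ X) (hcb : cb ∈ X) (hcd : cd ∈ X)
    (hdisj : ¬ ∃ u, G.incid u ca.2 ∧ G.incid u cb.2)
    (hnc : ¬ G.Collinear cb.1 cd.1) :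
    X.ncard ≤ s * t + s + t := by
  classical
  obtain ⟨p1, l1⟩ := ca
  obtain ⟨p2, l2⟩ := cb
  obtain ⟨p4, l4⟩ := cd
  simp only at hdisj hnc ⊢
  have hch1 : G.incid p1 l1 := G.chamber hX hca
  have hch2 : G.incid p2 l2 := G.chamber hX hcb
  have hch4 : G.incid p4 l4 := G.chamber hX hcd
  -- basic geometry of the configuration
  have hp12 : p1 ≠ p2 := by
    intro h; exact hdisj ⟨p1, hch1, h ▸ hch2⟩
  have hcol12 : G.Collinear p1 p2 := by
    rcases G.nonopp_or hX hca hcb with h | h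
    · exact absurd h hdisj
    · exact h
  obtain ⟨m, hp1m, hp2m⟩ := hcol12
  have hl2l4 : l2 ≠ l4 := by
    intro h; exact hnc ⟨l4, h ▸ hch2, hch4⟩
  obtain ⟨z, hzl2, hzl4⟩ := (G.nonopp_or hX hcb hcd).resolve_right hnc
  have hp1l2 : ¬ G.incid p1 l2 := fun h => hdisj ⟨p1, hch1, h⟩
  have hml2 : m ≠ l2 := fun h => hp1l2 (h ▸ hp1m)
  have hml1 : m ≠ l1 := by
    intro h; exact hdisj ⟨p2, h ▸ hp2m, hch2⟩
  have hp2l4 : ¬ G.incid p2 l4 := fun h => hnc ⟨l4, h, hch4⟩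
  have hzp2 : z ≠ p2 := fun h => hp2l4 (h ▸ hzl4)
  have hzm : ¬ G.incid z m := by
    intro h
    exact hzp2 (G.meet_unique hml2 h hzl2 hp2m hch2)
  have hp4m : ¬ G.incid p4 m := fun h => hnc ⟨m, hp2m, h⟩
  have hp4l2 : ¬ G.incid p4 l2 := fun h => hnc ⟨l2, hch2, h⟩
  have hzl1 : ¬ G.incid z l1 := fun h => hdisj ⟨z, h, hzl2⟩
  -- buckets
  set M := {c ∈ X | G.incid c.1 m} with hM
  set Z := {c ∈ X | ¬ G.incid c.1 m ∧ G.incid z c.2} with hZ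
  set Φ := {c ∈ X | ¬ G.incid c.1 m ∧ ¬ G.incid z c.2} with hΦ
  have hcover : X ⊆ M ∪ Z ∪ Φ := by
    intro c hc
    by_cases h1 : G.incid c.1 m
    · exact Or.inl (Or.inl ⟨hc, h1⟩)
    by_cases h2 : G.incid z c.2
    · exact Or.inl (Or.inr ⟨hc, h1, h2⟩)
    · exact Or.inr ⟨hc, h1, h2⟩
  have hMcard : M.ncard ≤ s + 1 := by
    have := ncard_le_of_inj_pt M {p | G.incid p m}
      (fun c hc => hc.2)
      (fun c hc c' hc' h => hPuniq c hc.1 c' hc'.1 h)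
    rwa [G.ncard_pts_on m] at this
  have hZl2 : ∀ c ∈ Z, c.2 ≠ l2 := by
    intro c hc h
    have : c = (p2, l2) := hLuniq c hc.1 (p2, l2) hcb h
    exact hc.2.1 (by rw [this]; exact hp2m)
  have hZcard : Z.ncard ≤ t := by
    have := ncard_le_of_inj_ln Z {n | G.incid z n ∧ n ≠ l2}
      (fun c hc => ⟨hc.2.2, hZl2 c hc⟩)
      (fun c hc c' hc' h => hLuniq c hc.1 c' hc'.1 h)
    exact this.trans (G.ncard_lns_thru_ne z l2 hzl2)
  -- flags in Φ cannot see both p1 and p2, nor meet both l2 and l4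
  have hΦpt : ∀ c ∈ Φ, ¬ (G.Collinear c.1 p1 ∧ G.Collinear c.1 p2) := by
    rintro c hc ⟨ha, hb⟩
    exact G.noTriangle hp12 hp1m hp2m hc.2.1 ha hb
  have hΦln : ∀ c ∈ Φ, (∃ u, G.incid u c.2 ∧ G.incid u l2) →
      (∃ u, G.incid u c.2 ∧ G.incid u l4) → False := by
    rintro c hc ⟨u2, hu2c, hu2⟩ ⟨u4, hu4c, hu4⟩
    have hu2z : u2 ≠ z := fun h => hc.2.2 (h ▸ hu2c)
    have hu4z : u4 ≠ z := fun h => hc.2.2 (h ▸ hu4c)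
    have hu4l2 : ¬ G.incid u4 l2 := by
      intro h
      exact hu4z (G.meet_unique hl2l4 h hu4 hzl2 hzl4)
    exact G.noTriangle hu2z hu2 hzl2 hu4l2 ⟨c.2, hu4c, hu2c⟩ ⟨l4, hu4, hzl4⟩
  set Φ2 := {c ∈ Φ | G.Collinear c.1 p2} with hΦ2
  set Φ4 := {c ∈ Φ | ¬ G.Collinear c.1 p2} with hΦ4
  have hΦcover : Φ ⊆ Φ2 ∪ Φ4 := by
    intro c hc
    by_cases h : G.Collinear c.1 p2
    · exact Or.inl ⟨hc, h⟩
    · exact Or.inr ⟨hc, h⟩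
  -- ### Φ2 analysis
  have hΦ2meet : ∀ c ∈ Φ2, ∃ u, G.incid u c.2 ∧ G.incid u l1 := by
    intro c hc
    rcases G.nonopp_or hX hc.1.1 hca with h | h
    · exact h
    · exact absurd ⟨h, hc.2⟩ (hΦpt c hc.1)
  have hΦ2nl1 : ∀ c ∈ Φ2, c.2 ≠ l1 := by
    intro c hc h
    have : c = (p1, l1) := hLuniq c hc.1.1 (p1, l1) hca h
    exact hc.1.2.1 (by rw [this]; exact hp1m)
  have hΦ2np2 : ∀ c ∈ Φ2, c.1 ≠ p2 := by
    intro c hc h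
    exact hc.1.2.1 (h ▸ hp2m)
  have hgm2ex : ∀ c : Pt × Ln, ∃ n : Ln, c ∈ Φ2 → (G.incid c.1 n ∧ G.incid p2 n) := by
    intro c
    by_cases hc : c ∈ Φ2
    · obtain ⟨n, hn⟩ := hc.2
      exact ⟨n, fun _ => hn⟩
    · exact ⟨l1, fun h => absurd h hc⟩
  choose gm2 hgm2 using hgm2ex
  have hym2ex : ∀ c : Pt × Ln, ∃ u : Pt, c ∈ Φ2 → (G.incid u c.2 ∧ G.incid u l1) := by
    intro c
    by_cases hc : c ∈ Φ2
    · obtain ⟨u, hu⟩ := hΦ2meet c hc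
      exact ⟨u, fun _ => hu⟩
    · exact ⟨p1, fun h => absurd h hc⟩
  choose ym2 hym2 using hym2ex
  have hdich2 : ∀ c ∈ Φ2, ∀ c' ∈ Φ2, gm2 c = gm2 c' ∨ ym2 c = ym2 c' := by
    intro c hc c' hc'
    by_cases hpt : c.1 = c'.1
    · left; rw [hPuniq c hc.1.1 c' hc'.1.1 hpt]
    have hln : c.2 ≠ c'.2 := by
      intro h
      exact hpt (by rw [hLuniq c hc.1.1 c' hc'.1.1 h])
    by_cases hcol : G.Collinear c.1 c'.1
    · left
      obtain ⟨lam, ha, hb, hcq⟩ := G.triple_line hpt hcol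
        (G.collinear_symm hc.2) (G.collinear_symm hc'.2)
      have e1 : gm2 c = lam :=
        G.unique_line (hΦ2np2 c hc) (hgm2 c hc).1 (hgm2 c hc).2 ha hcq
      have e2 : gm2 c' = lam :=
        G.unique_line (hΦ2np2 c' hc') (hgm2 c' hc').1 (hgm2 c' hc').2 hb hcq
      rw [e1, e2]
    · right
      obtain ⟨u, huc, huc'⟩ := (G.nonopp_or hX hc.1.1 hc'.1.1).resolve_right hcol
      by_cases hu : G.incid u l1
      · have e1 : u = ym2 c :=
          G.meet_unique (hΦ2nl1 c hc) huc hu (hym2 c hc).1 (hym2 c hc).2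
        have e2 : u = ym2 c' :=
          G.meet_unique (hΦ2nl1 c' hc') huc' hu (hym2 c' hc').1 (hym2 c' hc').2
        rw [← e1, ← e2]
      · by_cases hyy : ym2 c = ym2 c'
        · exact hyy
        · exact absurd (G.noTriangle hyy (hym2 c hc).2 (hym2 c' hc').2 hu
            ⟨c.2, huc, (hym2 c hc).1⟩ ⟨c'.2, huc', (hym2 c' hc').1⟩) (fun h => h)
  have hΦ2card : Φ2.ncard ≤ s ∨ Φ2.ncard ≤ t := by
    rcases Φ2.eq_empty_or_nonempty with hE | ⟨c₀, hc₀⟩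
    · left; rw [hE]; simp
    rcases glob_dichotomy Φ2 gm2 ym2 hdich2 with hall | hall
    · left
      have := ncard_le_of_inj_pt Φ2 {q | G.incid q (gm2 c₀) ∧ q ≠ p2}
        (fun c hc => ⟨(hall c hc c₀ hc₀) ▸ (hgm2 c hc).1, hΦ2np2 c hc⟩)
        (fun c hc c' hc' h => hPuniq c hc.1.1 c' hc'.1.1 h)
      exact this.trans (G.ncard_pts_on_ne (gm2 c₀) p2 (hgm2 c₀ hc₀).2)
    · right
      have := ncard_le_of_inj_ln Φ2 {n | G.incid (ym2 c₀) n ∧ n ≠ l1}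
        (fun c hc => ⟨(hall c hc c₀ hc₀) ▸ (hym2 c hc).1, hΦ2nl1 c hc⟩)
        (fun c hc c' hc' h => hLuniq c hc.1.1 c' hc'.1.1 h)
      exact this.trans (G.ncard_lns_thru_ne (ym2 c₀) l1 (hym2 c₀ hc₀).2)
  -- ### Φ4 analysis
  have hΦ4meet : ∀ c ∈ Φ4, ∃ u, G.incid u c.2 ∧ G.incid u l2 := by
    intro c hc
    rcases G.nonopp_or hX hc.1.1 hcb with h | h
    · exact h
    · exact absurd h hc.2
  have hΦ4col : ∀ c ∈ Φ4, G.Collinear c.1 p4 := by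
    intro c hc
    rcases G.nonopp_or hX hc.1.1 hcd with h | h
    · exact absurd (hΦln c hc.1 (hΦ4meet c hc) h) (fun h => h)
    · exact h
  have hΦ4nl2 : ∀ c ∈ Φ4, c.2 ≠ l2 := by
    intro c hc h
    exact hc.1.2.2 (h ▸ hzl2)
  have hΦ4np4 : ∀ c ∈ Φ4, c.1 ≠ p4 := by
    intro c hc h
    have : c = (p4, l4) := hPuniq c hc.1.1 (p4, l4) hcd h
    exact hc.1.2.2 (by rw [this]; exact hzl4)
  have hgm4ex : ∀ c : Pt × Ln, ∃ n : Ln, c ∈ Φ4 → (G.incid c.1 n ∧ G.incid p4 n) := by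
    intro c
    by_cases hc : c ∈ Φ4
    · obtain ⟨n, hn⟩ := hΦ4col c hc
      exact ⟨n, fun _ => hn⟩
    · exact ⟨l1, fun h => absurd h hc⟩
  choose gm4 hgm4 using hgm4ex
  have hym4ex : ∀ c : Pt × Ln, ∃ u : Pt, c ∈ Φ4 → (G.incid u c.2 ∧ G.incid u l2) := by
    intro c
    by_cases hc : c ∈ Φ4
    · obtain ⟨u, hu⟩ := hΦ4meet c hc
      exact ⟨u, fun _ => hu⟩
    · exact ⟨p1, fun h => absurd h hc⟩
  choose ym4 hym4 using hym4ex
  have hdich4 : ∀ c ∈ Φ4, ∀ c' ∈ Φ4, gm4 c = gm4 c' ∨ ym4 c = ym4 c' := by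
    intro c hc c' hc'
    by_cases hpt : c.1 = c'.1
    · left; rw [hPuniq c hc.1.1 c' hc'.1.1 hpt]
    have hln : c.2 ≠ c'.2 := by
      intro h
      exact hpt (by rw [hLuniq c hc.1.1 c' hc'.1.1 h])
    by_cases hcol : G.Collinear c.1 c'.1
    · left
      obtain ⟨lam, ha, hb, hcq⟩ := G.triple_line hpt hcol
        (G.collinear_symm (hΦ4col c hc)) (G.collinear_symm (hΦ4col c' hc'))
      have e1 : gm4 c = lam :=
        G.unique_line (hΦ4np4 c hc) (hgm4 c hc).1 (hgm4 c hc).2 ha hcq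
      have e2 : gm4 c' = lam :=
        G.unique_line (hΦ4np4 c' hc') (hgm4 c' hc').1 (hgm4 c' hc').2 hb hcq
      rw [e1, e2]
    · right
      obtain ⟨u, huc, huc'⟩ := (G.nonopp_or hX hc.1.1 hc'.1.1).resolve_right hcol
      by_cases hu : G.incid u l2
      · have e1 : u = ym4 c :=
          G.meet_unique (hΦ4nl2 c hc) huc hu (hym4 c hc).1 (hym4 c hc).2
        have e2 : u = ym4 c' :=
          G.meet_unique (hΦ4nl2 c' hc') huc' hu (hym4 c' hc').1 (hym4 c' hc').2
        rw [← e1, ← e2]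
      · by_cases hyy : ym4 c = ym4 c'
        · exact hyy
        · exact absurd (G.noTriangle hyy (hym4 c hc).2 (hym4 c' hc').2 hu
            ⟨c.2, huc, (hym4 c hc).1⟩ ⟨c'.2, huc', (hym4 c' hc').1⟩) (fun h => h)
  have hΦ4card : Φ4.ncard ≤ s ∨ (Φ4.ncard ≤ t ∧
      ∀ c ∈ Φ4, ∀ c' ∈ Φ4, ym4 c = ym4 c') := by
    rcases Φ4.eq_empty_or_nonempty with hE | ⟨c₀, hc₀⟩
    · left; rw [hE]; simp
    rcases glob_dichotomy Φ4 gm4 ym4 hdich4 with hall | hall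
    · left
      have := ncard_le_of_inj_pt Φ4 {q | G.incid q (gm4 c₀) ∧ q ≠ p4}
        (fun c hc => ⟨(hall c hc c₀ hc₀) ▸ (hgm4 c hc).1, hΦ4np4 c hc⟩)
        (fun c hc c' hc' h => hPuniq c hc.1.1 c' hc'.1.1 h)
      exact this.trans (G.ncard_pts_on_ne (gm4 c₀) p4 (hgm4 c₀ hc₀).2)
    · right
      refine ⟨?_, hall⟩
      have := ncard_le_of_inj_ln Φ4 {n | G.incid (ym4 c₀) n ∧ n ≠ l2}
        (fun c hc => ⟨(hall c hc c₀ hc₀) ▸ (hym4 c hc).1, hΦ4nl2 c hc⟩)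
        (fun c hc c' hc' h => hLuniq c hc.1.1 c' hc'.1.1 h)
      exact this.trans (G.ncard_lns_thru_ne (ym4 c₀) l2 (hym4 c₀ hc₀).2)
  -- ### the kill for s = 2
  have hkill : s = 2 → (∀ c ∈ Φ4, ∀ c' ∈ Φ4, ym4 c = ym4 c') →
      t ≤ Φ4.ncard → 2 ≤ Z.ncard → False := by
    intro hs2 hyall hbig hZ2
    -- at most one flag of Φ4 whose line meets l1
    have honem : ∀ c ∈ Φ4, ∀ c' ∈ Φ4,
        (∃ u, G.incid u c.2 ∧ G.incid u l1) →
        (∃ u, G.incid u c'.2 ∧ G.incid u l1) → c = c' := by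
      rintro c hc c' hc' ⟨u, huc, hul1⟩ ⟨u', huc', hul1'⟩
      by_contra hne
      have hll : c.2 ≠ c'.2 := by
        intro h; exact hne (hLuniq c hc.1.1 c' hc'.1.1 h)
      set y2 := ym4 c with hy2
      have hy2c' : ym4 c' = y2 := hyall c' hc' c hc
      have hy2l1 : ¬ G.incid y2 l1 := fun h => hdisj ⟨y2, h, (hym4 c hc).2⟩
      have huy2 : u ≠ y2 := fun h => hy2l1 (h ▸ hul1)
      have huu' : u ≠ u' := by
        intro h
        exact huy2 (G.meet_unique hll huc (h ▸ huc') (hym4 c hc).1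
          (hy2c' ▸ (hym4 c' hc').1))
      exact G.noTriangle huu' hul1 hul1' hy2l1
        ⟨c.2, (hym4 c hc).1, huc⟩ ⟨c'.2, hy2c' ▸ (hym4 c' hc').1, huc'⟩
    set Φ4' := {c ∈ Φ4 | ¬ ∃ u, G.incid u c.2 ∧ G.incid u l1} with hΦ4'
    have hΦ4'big : 2 ≤ Φ4'.ncard := by
      have hsplit : Φ4 ⊆ Φ4' ∪ {c ∈ Φ4 | ∃ u, G.incid u c.2 ∧ G.incid u l1} := by
        intro c hc
        by_cases h : ∃ u, G.incid u c.2 ∧ G.incid u l1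
        · exact Or.inr ⟨hc, h⟩
        · exact Or.inl ⟨hc, h⟩
      have hone : {c ∈ Φ4 | ∃ u, G.incid u c.2 ∧ G.incid u l1}.ncard ≤ 1 := by
        rw [Set.ncard_le_one_iff_eq]
        rcases {c ∈ Φ4 | ∃ u, G.incid u c.2 ∧ G.incid u l1}.eq_empty_or_nonempty
          with hE | ⟨c₀, hc₀⟩
        · exact Or.inl hE
        · right
          refine ⟨c₀, Set.eq_singleton_iff_unique_mem.mpr ⟨hc₀, fun c hc => ?_⟩⟩
          exact honem c hc.1 c₀ hc₀.1 hc.2 hc₀.2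
      have := Set.ncard_le_ncard hsplit (Set.toFinite _)
      have h2 := Set.ncard_union_le Φ4'
        {c ∈ Φ4 | ∃ u, G.incid u c.2 ∧ G.incid u l1}
      omega
    have hΦ4'p1 : ∀ c ∈ Φ4', G.Collinear c.1 p1 := by
      intro c hc
      rcases G.nonopp_or hX hc.1.1.1 hca with h | h
      · exact absurd h hc.2
      · exact h
    obtain ⟨ea, hea, eb, heb, heab⟩ := (Set.one_lt_ncard (Set.toFinite Φ4')).mp hΦ4'big
    set qa := ea.1 with hqa
    set qb := eb.1 with hqb
    have hqab : qa ≠ qb := by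
      intro h; exact heab (hPuniq ea hea.1.1.1 eb heb.1.1.1 h)
    have hqap1 : qa ≠ p1 := by
      intro h
      have he : ea.2 = l1 :=
        congrArg Prod.snd (hPuniq ea hea.1.1.1 (p1, l1) hca h)
      exact hdisj ⟨ym4 ea, he ▸ (hym4 ea hea.1).1, (hym4 ea hea.1).2⟩
    have hqbp1 : qb ≠ p1 := by
      intro h
      have he : eb.2 = l1 :=
        congrArg Prod.snd (hPuniq eb heb.1.1.1 (p1, l1) hca h)
      exact hdisj ⟨ym4 eb, he ▸ (hym4 eb heb.1).1, (hym4 eb heb.1).2⟩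
    have hp14 : ¬ G.Collinear p1 p4 := by
      intro hcol
      have hp1p4 : p1 ≠ p4 := fun h => hp4m (h ▸ hp1m)
      obtain ⟨lam14, hp1lam, hp4lam⟩ := hcol
      have hqalam : G.incid qa lam14 := by
        by_cases h : G.incid qa lam14
        · exact h
        · exact absurd (G.noTriangle hp1p4 hp1lam hp4lam h
            (hΦ4'p1 ea hea) (hΦ4col ea hea.1)) (fun hh => hh)
      have hqblam : G.incid qb lam14 := by
        by_cases h : G.incid qb lam14
        · exact h
        · exact absurd (G.noTriangle hp1p4 hp1lam hp4lam h
            (hΦ4'p1 eb heb) (hΦ4col eb heb.1)) (fun hh => hh)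
      -- four distinct points on lam14, but s = 2
      have hqap4 : qa ≠ p4 := hΦ4np4 ea hea.1
      have hqbp4 : qb ≠ p4 := hΦ4np4 eb heb.1
      have hsub : {p1, p4, qa, qb} ⊆ {p | G.incid p lam14} := by
        rintro x (rfl | rfl | rfl | rfl)
        · exact hp1lam
        · exact hp4lam
        · exact hqalam
        · exact hqblam
      have hc4 : ({p1, p4, qa, qb} : Set Pt).ncard = 4 := by
        rw [Set.ncard_insert_of_notMem (by simp [hp1p4, hqap1.symm, hqbp1.symm]),
          Set.ncard_insert_of_notMem (by simp [hqap4.symm, hqbp4.symm]),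
          Set.ncard_insert_of_notMem (by simp [hqab]), Set.ncard_singleton]
      have := Set.ncard_le_ncard hsub (Set.toFinite _)
      rw [hc4, G.ncard_pts_on lam14, hs2] at this
      omega
    have hncqab : ¬ G.Collinear qa qb :=
      G.triadPerp hp14 hqab (hΦ4'p1 ea hea) (hΦ4col ea hea.1)
        (hΦ4'p1 eb heb) (hΦ4col eb heb.1)
    -- two flags in Z, at most one of whose lines meets l1
    obtain ⟨za, hza, zb, hzb, hzab⟩ := (Set.one_lt_ncard (Set.toFinite Z)).mp hZ2
    have hZone : ∀ c ∈ Z, ∀ c' ∈ Z, (∃ u, G.incid u c.2 ∧ G.incid u l1) →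
        (∃ u, G.incid u c'.2 ∧ G.incid u l1) → c = c' := by
      rintro c hc c' hc' ⟨u, huc, hul1⟩ ⟨u', huc', hul1'⟩
      by_contra hne
      have hll : c.2 ≠ c'.2 := by
        intro h; exact hne (hLuniq c hc.1 c' hc'.1 h)
      have huz : u ≠ z := fun h => hzl1 (h ▸ hul1)
      have huu' : u ≠ u' := by
        intro h
        exact huz (G.meet_unique hll huc (h ▸ huc') hc.2.2 hc'.2.2)
      exact G.noTriangle huu' hul1 hul1' hzl1
        ⟨c.2, hc.2.2, huc⟩ ⟨c'.2, hc'.2.2, huc'⟩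
    have hzc : ∃ zc ∈ Z, ¬ ∃ u, G.incid u zc.2 ∧ G.incid u l1 := by
      by_cases h : ∃ u, G.incid u za.2 ∧ G.incid u l1
      · refine ⟨zb, hzb, fun h' => ?_⟩
        exact hzab (hZone za hza zb hzb h h')
      · exact ⟨za, hza, h⟩
    obtain ⟨zc, hzcZ, hzcl1⟩ := hzc
    set x := zc.1 with hx
    have hxp1 : G.Collinear x p1 := by
      rcases G.nonopp_or hX hzcZ.1 hca with h | h
      · exact absurd h hzcl1
      · exact h
    -- the line of zc misses the lines of ea and eb
    have hzdisj : ∀ e ∈ Φ4', ¬ ∃ u, G.incid u zc.2 ∧ G.incid u e.2 := by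
      rintro e he ⟨u, huz, hue⟩
      have hy2e : G.incid (ym4 e) e.2 := (hym4 e he.1).1
      have hy2l2 : G.incid (ym4 e) l2 := (hym4 e he.1).2
      have hzne : z ≠ ym4 e := by
        intro h
        exact he.1.1.2.2 (h ▸ hy2e)
      by_cases hul2 : G.incid u l2
      · have : u = z := G.meet_unique (hZl2 zc hzcZ) huz hul2 hzcZ.2.2 hzl2
        exact he.1.1.2.2 (this ▸ hue)
      · exact G.noTriangle hzne hzl2 hy2l2 hul2 ⟨zc.2, huz, hzcZ.2.2⟩ ⟨e.2, hue, hy2e⟩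
    have hxqa : G.Collinear x qa :=
      (G.nonopp_or hX hzcZ.1 hea.1.1.1).resolve_left (hzdisj ea hea)
    have hxqb : G.Collinear x qb :=
      (G.nonopp_or hX hzcZ.1 heb.1.1.1).resolve_left (hzdisj eb heb)
    have hxp1ne : x ≠ p1 := by
      intro h
      have : zc = (p1, l1) := hPuniq zc hzcZ.1 (p1, l1) hca h
      exact hzl1 (by rw [← show zc.2 = l1 from congrArg Prod.snd this]; exact hzcZ.2.2)
    exact (G.triadPerp hncqab hxp1ne hxqa hxqb
      (G.collinear_symm (hΦ4'p1 ea hea)) (G.collinear_symm (hΦ4'p1 eb heb))) hxp1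
  -- ### final assembly
  have htot : X.ncard ≤ (s + 1) + Z.ncard + Φ2.ncard + Φ4.ncard := by
    calc X.ncard ≤ (M ∪ Z ∪ Φ).ncard := Set.ncard_le_ncard hcover (Set.toFinite _)
      _ ≤ (M ∪ Z).ncard + Φ.ncard := Set.ncard_union_le _ _
      _ ≤ M.ncard + Z.ncard + Φ.ncard := by
          have := Set.ncard_union_le M Z; omega
      _ ≤ M.ncard + Z.ncard + (Φ2.ncard + Φ4.ncard) := by
          have h1 := Set.ncard_le_ncard hΦcover (Set.toFinite (Φ2 ∪ Φ4))
          have h2 := Set.ncard_union_le Φ2 Φ4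
          omega
      _ ≤ (s + 1) + Z.ncard + Φ2.ncard + Φ4.ncard := by omega
  rcases hΦ4card with h4 | ⟨h4, hyall⟩
  · rcases hΦ2card with h2 | h2
    · nlinarith
    · nlinarith
  · rcases hΦ2card with h2 | h2
    · nlinarith
    · -- both in the t-branch
      by_cases hs3 : 3 ≤ s
      · nlinarith
      · have hs2 : s = 2 := by omega
        by_cases hZ1 : Z.ncard ≤ 1
        · nlinarith
        · by_cases hsmall : Φ4.ncard + 1 ≤ t
          · nlinarith
          · exact absurd (hkill hs2 hyall (by omega) (by omega)) (fun h => h)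


/-- The mixed-case bound, for `t ≥ 3`. -/
lemma mixed_bound (hs : 2 ≤ s) (ht : 3 ≤ t) (hX : G.NonOppSet X)
    {c1 c2 c3 c4 : Pt × Ln} (h1 : c1 ∈ X) (h2 : c2 ∈ X) (h3 : c3 ∈ X) (h4 : c4 ∈ X)
    (hdisj : ¬ ∃ u, G.incid u c1.2 ∧ G.incid u c2.2)
    (hnc : ¬ G.Collinear c3.1 c4.1) :
    X.ncard ≤ s * t + s + t := by
  have ht2 : 2 ≤ t := by omega
  by_cases hP : ∃ f ∈ X, ∃ g ∈ X, f ≠ g ∧ f.1 = g.1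
  · obtain ⟨f, hf, g, hg, hfg, hq⟩ := hP
    by_cases hL : ∃ f ∈ X, ∃ g ∈ X, f ≠ g ∧ f.2 = g.2
    · obtain ⟨f', hf', g', hg', hfg', hl'⟩ := hL
      exact G.case_IV hs ht2 hX h1 h2 h3 h4 hdisj hnc hf hg hf' hg' hfg hq hfg' hl'
    · push_neg at hL
      have hLuniq : ∀ c ∈ X, ∀ c' ∈ X, c.2 = c'.2 → c = c' := by
        intro c hc c' hc' h
        by_contra hne
        exact hL c hc c' hc' hne h
      exact G.case_II hs ht2 hX h3 h4 hnc hf hg hfg hq hLuniq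
  · push_neg at hP
    have hPuniq : ∀ c ∈ X, ∀ c' ∈ X, c.1 = c'.1 → c = c' := by
      intro c hc c' hc' h
      by_contra hne
      exact hP c hc c' hc' hne h
    by_cases hL : ∃ f ∈ X, ∃ g ∈ X, f ≠ g ∧ f.2 = g.2
    · obtain ⟨f', hf', g', hg', hfg', hl'⟩ := hL
      exact G.case_III hs ht2 hX h1 h2 hdisj hf' hg' hfg' hl' hPuniq
    · push_neg at hL
      have hLuniq : ∀ c ∈ X, ∀ c' ∈ X, c.2 = c'.2 → c = c' := by
        intro c hc c' hc' h
        by_contra hne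
        exact hL c hc c' hc' hne h
      by_cases hcen : ∃ b ∈ X, (∃ a ∈ X, ¬ ∃ u, G.incid u b.2 ∧ G.incid u a.2) ∧
          (∃ d ∈ X, ¬ G.Collinear b.1 d.1)
      · obtain ⟨b, hb, ⟨a, ha, hab⟩, ⟨d, hd, hbd⟩⟩ := hcen
        have hab' : ¬ ∃ u, G.incid u a.2 ∧ G.incid u b.2 := by
          rintro ⟨u, h1', h2'⟩
          exact hab ⟨u, h2', h1'⟩
        exact G.case_I_center hs ht hX hPuniq hLuniq ha hb hd hab' hbd
      · have hnocen : ∀ b ∈ X, (∀ a ∈ X, ∃ u, G.incid u b.2 ∧ G.incid u a.2) ∨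
            (∀ d ∈ X, G.Collinear b.1 d.1) := by
          intro b hb
          by_cases hA : ∀ a ∈ X, ∃ u, G.incid u b.2 ∧ G.incid u a.2
          · exact Or.inl hA
          · push_neg at hA
            obtain ⟨a, ha, hna⟩ := hA
            right
            intro d hd
            by_contra hnd
            exact hcen ⟨b, hb, ⟨a, ha, fun ⟨u, hu1, hu2⟩ => hna u hu1 hu2⟩, ⟨d, hd, hnd⟩⟩
        exact G.case_I_nocenter hs ht hX hPuniq hLuniq hnocen

end GenQuad

/-- The dual generalized quadrangle. -/
def GenQuad.dual (G : GenQuad Pt Ln s t) : GenQuad Ln Pt t s where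
  incid l p := G.incid p l
  line_card p := G.point_card p
  point_card l := G.line_card l
  unique_line := by
    intro p q l m hpq hpl hql hpm hqm
    by_contra h
    exact hpq (G.unique_line h hpl hpm hql hqm)
  antiflag := by
    intro p l h
    exact G.proj_ln h

namespace GenQuad

variable [Finite Pt] [Finite Ln] (G : GenQuad Pt Ln s t) {X : Set (Pt × Ln)}

lemma dual_nonopp (hX : G.NonOppSet X) :
    G.dual.NonOppSet ((fun c : Pt × Ln => (c.2, c.1)) '' X) := by
  constructor
  · rintro c ⟨d, hd, rfl⟩
    exact G.chamber hX hd
  · rintro c ⟨d, hd, rfl⟩ c' ⟨d', hd', rfl⟩ ⟨hA, hB⟩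
    exact hX.2 d hd d' hd' ⟨fun ⟨u, hu1, hu2⟩ => hB ⟨u, hu1, hu2⟩,
      fun ⟨n, hn1, hn2⟩ => hA ⟨n, hn1, hn2⟩⟩

/-- The mixed-case bound without the `t ≥ 3` assumption, provided `(s,t) ≠ (2,2)`. -/
lemma mixed_bound' (hs : 2 ≤ s) (ht : 2 ≤ t) (hst : ¬ (s = 2 ∧ t = 2))
    (hX : G.NonOppSet X)
    {c1 c2 c3 c4 : Pt × Ln} (h1 : c1 ∈ X) (h2 : c2 ∈ X) (h3 : c3 ∈ X) (h4 : c4 ∈ X)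
    (hdisj : ¬ ∃ u, G.incid u c1.2 ∧ G.incid u c2.2)
    (hnc : ¬ G.Collinear c3.1 c4.1) :
    X.ncard ≤ s * t + s + t := by
  by_cases ht3 : 3 ≤ t
  · exact G.mixed_bound hs ht3 hX h1 h2 h3 h4 hdisj hnc
  · have ht2 : t = 2 := by omega
    have hs3 : 3 ≤ s := by
      rcases Nat.lt_or_ge s 3 with h | h
      · exact absurd ⟨by omega, ht2⟩ hst
      · exact h
    -- pass to the dual
    set X' := (fun c : Pt × Ln => (c.2, c.1)) '' X with hX'
    have hdual := G.dual_nonopp hX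
    have hmem : ∀ c ∈ X, (c.2, c.1) ∈ X' := fun c hc => ⟨c, hc, rfl⟩
    have hdisj' : ¬ ∃ u : Ln, G.dual.incid u ((c3.2, c3.1) : Ln × Pt).2 ∧
        G.dual.incid u ((c4.2, c4.1) : Ln × Pt).2 := by
      rintro ⟨n, hn1, hn2⟩
      exact hnc ⟨n, hn1, hn2⟩
    have hnc' : ¬ G.dual.Collinear ((c1.2, c1.1) : Ln × Pt).1 ((c2.2, c2.1) : Ln × Pt).1 := by
      rintro ⟨u, hu1, hu2⟩
      exact hdisj ⟨u, hu1, hu2⟩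
    have hb := G.dual.mixed_bound ht (by omega) hdual
      (hmem c3 h3) (hmem c4 h4) (hmem c1 h1) (hmem c2 h2) hdisj' hnc'
    have hinj : Function.Injective (fun c : Pt × Ln => ((c.2, c.1) : Ln × Pt)) := by
      intro a b h
      have h1 := congrArg Prod.fst h
      have h2 := congrArg Prod.snd h
      exact Prod.ext h2 h1
    rw [Set.ncard_image_of_injective X hinj] at hb
    calc X.ncard ≤ t * s + t + s := hb
      _ ≤ s * t + s + t := by rw [Nat.mul_comm]; omega

/-! ### Counting flags through a point / on a line -/

lemma ncard_flags_thru_le (P : Pt) : (G.FlagsThruPoint P).ncard ≤ (s + 1) * (t + 1) := by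
  classical
  haveI : Fintype Pt := Fintype.ofFinite Pt
  haveI : Fintype Ln := Fintype.ofFinite Ln
  have hS : (G.FlagsThruPoint P).ncard = (G.FlagsThruPoint P).toFinset.card :=
    Set.ncard_eq_toFinset_card' _
  rw [hS]
  have hT : (Finset.univ.filter (fun n => G.incid P n)).card = t + 1 := by
    have := G.point_card P
    rw [Nat.card_eq_fintype_card, Fintype.card_subtype] at this
    exact this
  have hmain := Finset.card_le_mul_card_image_of_maps_to
    (f := fun c : Pt × Ln => c.2) (s := (G.FlagsThruPoint P).toFinset)
    (t := Finset.univ.filter (fun n => G.incid P n))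
    (by
      intro c hc
      rw [Set.mem_toFinset] at hc
      simp only [Finset.mem_filter, Finset.mem_univ, true_and]
      exact hc.2)
    (s + 1)
    (by
      intro n hn
      have : ((G.FlagsThruPoint P).toFinset.filter (fun c => c.2 = n)) ⊆
          (Finset.univ.filter (fun p : Pt => G.incid p n)).image (fun p => (p, n)) := by
        intro c hc
        rw [Finset.mem_filter, Set.mem_toFinset] at hc
        rw [Finset.mem_image]
        refine ⟨c.1, ?_, ?_⟩
        · simp only [Finset.mem_filter, Finset.mem_univ, true_and]
          exact hc.2 ▸ hc.1.1
        · rw [← hc.2]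
      calc ((G.FlagsThruPoint P).toFinset.filter (fun c => c.2 = n)).card
          ≤ ((Finset.univ.filter (fun p : Pt => G.incid p n)).image (fun p => (p, n))).card :=
            Finset.card_le_card this
        _ ≤ (Finset.univ.filter (fun p : Pt => G.incid p n)).card :=
            Finset.card_image_le
        _ = s + 1 := by
            have := G.line_card n
            rw [Nat.card_eq_fintype_card, Fintype.card_subtype] at this
            exact this)
  rw [hT] at hmain
  exact hmain

lemma ncard_flags_on_le (l : Ln) : (G.FlagsOnLine l).ncard ≤ (s + 1) * (t + 1) := by
  classical
  haveI : Fintype Pt := Fintype.ofFinite Pt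
  haveI : Fintype Ln := Fintype.ofFinite Ln
  have hS : (G.FlagsOnLine l).ncard = (G.FlagsOnLine l).toFinset.card :=
    Set.ncard_eq_toFinset_card' _
  rw [hS]
  have hT : (Finset.univ.filter (fun p => G.incid p l)).card = s + 1 := by
    have := G.line_card l
    rw [Nat.card_eq_fintype_card, Fintype.card_subtype] at this
    exact this
  have hmain := Finset.card_le_mul_card_image_of_maps_to
    (f := fun c : Pt × Ln => c.1) (s := (G.FlagsOnLine l).toFinset)
    (t := Finset.univ.filter (fun p => G.incid p l))
    (by
      intro c hc
      rw [Set.mem_toFinset] at hc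
      simp only [Finset.mem_filter, Finset.mem_univ, true_and]
      exact hc.2)
    (t + 1)
    (by
      intro p hp
      have : ((G.FlagsOnLine l).toFinset.filter (fun c => c.1 = p)) ⊆
          (Finset.univ.filter (fun n : Ln => G.incid p n)).image (fun n => (p, n)) := by
        intro c hc
        rw [Finset.mem_filter, Set.mem_toFinset] at hc
        rw [Finset.mem_image]
        refine ⟨c.2, ?_, ?_⟩
        · simp only [Finset.mem_filter, Finset.mem_univ, true_and]
          exact hc.2 ▸ hc.1.1
        · rw [← hc.2]
      calc ((G.FlagsOnLine l).toFinset.filter (fun c => c.1 = p)).card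
          ≤ ((Finset.univ.filter (fun n : Ln => G.incid p n)).image (fun n => (p, n))).card :=
            Finset.card_le_card this
        _ ≤ (Finset.univ.filter (fun n : Ln => G.incid p n)).card :=
            Finset.card_image_le
        _ = t + 1 := by
            have := G.point_card p
            rw [Nat.card_eq_fintype_card, Fintype.card_subtype] at this
            exact this)
  rw [hT] at hmain
  calc (G.FlagsOnLine l).toFinset.card ≤ (t + 1) * (s + 1) := hmain
    _ = (s + 1) * (t + 1) := Nat.mul_comm _ _

end GenQuad

namespace GenQuad

variable [Finite Pt] [Finite Ln] (G : GenQuad Pt Ln s t) {X : Set (Pt × Ln)}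

lemma classify_allmeet (hs : 2 ≤ s) (ht : 2 ≤ t) (hX : G.NonOppSet X)
    (hcard : X.ncard = (s + 1) * (t + 1))
    (hmeet : ∀ c ∈ X, ∀ c' ∈ X, ∃ u, G.incid u c.2 ∧ G.incid u c'.2) :
    ∃ P : Pt, X = G.FlagsThruPoint P := by
  have hne : X.Nonempty := by
    apply Set.nonempty_of_ncard_ne_zero
    rw [hcard]
    positivity
  obtain ⟨c₀, hc₀⟩ := hne
  by_cases hall : ∀ c ∈ X, c.2 = c₀.2
  · exfalso
    have hle := ncard_le_of_inj_pt X {p | G.incid p c₀.2}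
      (fun c hc => (hall c hc) ▸ G.chamber hX hc)
      (fun c hc c' hc' h => Prod.ext h ((hall c hc).trans (hall c' hc').symm))
    rw [G.ncard_pts_on, hcard] at hle
    nlinarith
  · push_neg at hall
    obtain ⟨cA, hcA, hAne⟩ := hall
    obtain ⟨v, hv1, hv2⟩ := hmeet cA hcA c₀ hc₀
    have hallv : ∀ c ∈ X, G.incid v c.2 := by
      intro c hc
      by_cases hvc : G.incid v c.2
      · exact hvc
      exfalso
      obtain ⟨u1, hu1c, hu1A⟩ := hmeet c hc cA hcA
      obtain ⟨u2, hu2c, hu20⟩ := hmeet c hc c₀ hc₀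
      have hcA2 : c.2 ≠ cA.2 := fun h => hvc (h ▸ hv1)
      have hc02 : c.2 ≠ c₀.2 := fun h => hvc (h ▸ hv2)
      have hu1v : u1 ≠ v := fun h => hvc (h ▸ hu1c)
      have hu12 : u1 ≠ u2 := by
        intro h
        exact hu1v (G.meet_unique hAne hu1A (h ▸ hu20) hv1 hv2)
      have hu2A : ¬ G.incid u2 cA.2 := by
        intro h
        exact hu12 (G.meet_unique hcA2 hu1c hu1A hu2c h)
      exact G.noTriangle hu1v.symm hv1 hu1A hu2A ⟨c₀.2, hu20, hv2⟩ ⟨c.2, hu2c, hu1c⟩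
    refine ⟨v, Set.eq_of_subset_of_ncard_le
      (fun c hc => ⟨G.chamber hX hc, hallv c hc⟩) ?_ (Set.toFinite _)⟩
    rw [hcard]
    exact G.ncard_flags_thru_le v

lemma classify_allcol (hs : 2 ≤ s) (ht : 2 ≤ t) (hX : G.NonOppSet X)
    (hcard : X.ncard = (s + 1) * (t + 1))
    (hcol : ∀ c ∈ X, ∀ c' ∈ X, G.Collinear c.1 c'.1) :
    ∃ l : Ln, X = G.FlagsOnLine l := by
  have hne : X.Nonempty := by
    apply Set.nonempty_of_ncard_ne_zero
    rw [hcard]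
    positivity
  obtain ⟨c₀, hc₀⟩ := hne
  by_cases hall : ∀ c ∈ X, c.1 = c₀.1
  · exfalso
    have hle := ncard_le_of_inj_ln X {n | G.incid c₀.1 n}
      (fun c hc => (hall c hc) ▸ G.chamber hX hc)
      (fun c hc c' hc' h => Prod.ext ((hall c hc).trans (hall c' hc').symm) h)
    rw [G.ncard_lns_thru, hcard] at hle
    nlinarith
  · push_neg at hall
    obtain ⟨cA, hcA, hAne⟩ := hall
    obtain ⟨lam, hA, h0⟩ := hcol cA hcA c₀ hc₀
    have hallv : ∀ c ∈ X, G.incid c.1 lam := by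
      intro c hc
      by_cases hvc : G.incid c.1 lam
      · exact hvc
      exact absurd (G.noTriangle hAne hA h0 hvc
        (hcol c hc cA hcA) (hcol c hc c₀ hc₀)) (fun h => h)
    refine ⟨lam, Set.eq_of_subset_of_ncard_le
      (fun c hc => ⟨G.chamber hX hc, hallv c hc⟩) ?_ (Set.toFinite _)⟩
    rw [hcard]
    exact G.ncard_flags_on_le lam

end GenQuad

theorem nonOppSet_max_card_classification' [Finite Pt] [Finite Ln]
    (G : GenQuad Pt Ln s t) (hs : 2 ≤ s) (ht : 2 ≤ t)
    (X : Set (Pt × Ln)) (hX : G.NonOppSet X)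
    (hcard : X.ncard = (s + 1) * (t + 1)) (hst : ¬ (s = 2 ∧ t = 2)) :
    (∃ P : Pt, X = G.FlagsThruPoint P) ∨ (∃ l : Ln, X = G.FlagsOnLine l) := by
  by_cases hmeet : ∀ c ∈ X, ∀ c' ∈ X, ∃ u, G.incid u c.2 ∧ G.incid u c'.2
  · exact Or.inl (G.classify_allmeet hs ht hX hcard hmeet)
  · push_neg at hmeet
    obtain ⟨c1, h1, c2, h2, hd⟩ := hmeet
    have hdisj : ¬ ∃ u, G.incid u c1.2 ∧ G.incid u c2.2 := by
      rintro ⟨u, ha, hb⟩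
      exact hd u ha hb
    by_cases hcol : ∀ c ∈ X, ∀ c' ∈ X, G.Collinear c.1 c'.1
    · exact Or.inr (G.classify_allcol hs ht hX hcard hcol)
    · exfalso
      push_neg at hcol
      obtain ⟨c3, h3, c4, h4, hnc⟩ := hcol
      have hb := G.mixed_bound' hs ht hst hX h1 h2 h3 h4 hdisj hnc
      rw [hcard] at hb
      have : (s + 1) * (t + 1) = s * t + s + t + 1 := by ring
      omega

theorem nonOppSet_max_card_classification [Finite Pt] [Finite Ln]
    (G : GenQuad Pt Ln s t) (hs : 2 ≤ s) (ht : 2 ≤ t)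
    (X : Set (Pt × Ln)) (hX : G.NonOppSet X)
    (hcard : X.ncard = (s + 1) * (t + 1)) (hst : ¬ (s = 2 ∧ t = 2)) :
    (∃ P : Pt, X = G.FlagsThruPoint P) ∨ (∃ l : Ln, X = G.FlagsOnLine l) := by
  exact nonOppSet_max_card_classification' G hs ht X hX hcard hst
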